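/- Let G be a connected undirected graph on [n], let P be an all-pairs set of paths for G, and let L≥2 be an integer. Let x,y∈{1}×[n]^L be good with x≠y, let J=J_{x,y}, and let b1,b2∈{0,1}. If v∈[n] satisfies g_{x,b1}(v)≠g_{y,b2}(v), then v∈Tail(J,S_x) or v∈Tail(J,S_y). -/

import Mathlib

open Finset

/-- An all-pairs set of simple paths in `G`, with `P^{u,u}` the trivial path. -/
structure PathSystem {n : ℕ} (G : SimpleGraph (Fin n)) where
  path : ∀ u v : Fin n, G.Walk u v
  isPath : ∀ u v : Fin n, (path u v).IsPath
  diag : ∀ u : Fin n, path u u = SimpleGraph.Walk.nil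

/-- Vertex congestion of a path system: max over vertices of total occurrences. -/
def PathSystem.congestion {n : ℕ} {G : SimpleGraph (Fin n)} (P : PathSystem G) : ℕ :=
  Finset.univ.sup fun w : Fin n =>
    ∑ u : Fin n, ∑ v : Fin n, (P.path u v).support.count w

/-- Support of the `i`-th quasi-segment `P^{x_i, x_{i+1}}` (0-based). -/
def segSupport {n L : ℕ} {G : SimpleGraph (Fin n)} (P : PathSystem G)
    (x : Fin (L + 1) → Fin n) (i : ℕ) : List (Fin n) :=
  (P.path (x ⟨min i L, by omega⟩) (x ⟨min (i + 1) L, by omega⟩)).support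

/-- Support of the staircase walk `P^{x_j,x_{j+1}} ∘ ⋯ ∘ P^{x_{L-1},x_L}` (0-based `j`). -/
def stairSupportFrom {n L : ℕ} {G : SimpleGraph (Fin n)} (P : PathSystem G)
    (x : Fin (L + 1) → Fin n) (j : ℕ) : List (Fin n) :=
  x ⟨min j L, by omega⟩ ::
    (List.ofFn fun k : Fin (L - j) =>
      (P.path (x ⟨j + k, by have := k.isLt; omega⟩)
              (x ⟨j + k + 1, by have := k.isLt; omega⟩)).support.tail).flatten

/-- `Tail(j, S_x)` (0-based `j`): the staircase from `x_j` with the first occurrence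
of `x_j` removed. -/
def tailSupport {n L : ℕ} {G : SimpleGraph (Fin n)} (P : PathSystem G)
    (x : Fin (L + 1) → Fin n) (j : ℕ) : List (Fin n) :=
  (stairSupportFrom P x j).erase (x ⟨min j L, by omega⟩)

/-- Largest 0-based index `i` such that the prefixes `x_0 … x_i` and `y_0 … y_i` agree
(`J_{x,y} - 1` in 1-based notation). -/
def J0 {n L : ℕ} (x y : Fin (L + 1) → Fin n) : ℕ :=
  (Finset.univ.filter fun i : Fin (L + 1) => ∀ k ≤ i, x k = y k).sup fun i => (i : ℕ)

/-- `q_v(u)`: the number of paths in `P` starting at `u` that contain `v`. -/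
def qcount {n : ℕ} {G : SimpleGraph (Fin n)} (P : PathSystem G) (v u : Fin n) : ℕ :=
  (Finset.univ.filter fun w : Fin n => v ∈ (P.path u w).support).card

/-- Largest 0-based index `i` with `v ∈ P^{x_i,x_{i+1}}`. -/
def maxSegIdx {n L : ℕ} {G : SimpleGraph (Fin n)} (P : PathSystem G)
    (x : Fin (L + 1) → Fin n) (v : Fin n) : ℕ :=
  ((Finset.range L).filter fun i => v ∈ segSupport P x i).sup id

/-- The function `f_x`. -/
noncomputable def fS {n L : ℕ} {G : SimpleGraph (Fin n)} (P : PathSystem G)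
    (x : Fin (L + 1) → Fin n) (v : Fin n) : ℤ :=
  if v ∈ stairSupportFrom P x 0 then
    -(((maxSegIdx P x v : ℤ) + 1) * n) - (((segSupport P x (maxSegIdx P x v)).idxOf v : ℤ) + 1)
  else (G.dist v (x 0) : ℤ)

/-- The function `g_{x,b}`. -/
noncomputable def gS {n L : ℕ} {G : SimpleGraph (Fin n)} (P : PathSystem G)
    (x : Fin (L + 1) → Fin n) (b : ℤ) (v : Fin n) : ℤ × ℤ :=
  if v = x (Fin.last L) then (fS P x v, b) else (fS P x v, -1)

/-- The relation `r*`. -/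
noncomputable def rstar {n L : ℕ} (x y : Fin (L + 1) → Fin n) (b1 b2 : ℤ) : ℝ :=
  if b1 = b2 ∨ ¬ Function.Injective x ∨ ¬ Function.Injective y then 0
  else (n : ℝ) ^ (J0 x y + 1)

/-- The relation `r`. -/
noncomputable def rrel {n L : ℕ} (x y : Fin (L + 1) → Fin n) (b1 b2 : ℤ) : ℝ :=
  if x = y then 0 else rstar x y b1 b2

/-- The relation `r'`. -/
noncomputable def rprime {n L : ℕ} {G : SimpleGraph (Fin n)} (P : PathSystem G) (g : ℕ)
    (x y : Fin (L + 1) → Fin n) (b1 b2 : ℤ) (v : Fin n) : ℝ :=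
  if gS P x b1 v = gS P y b2 v ∨ b1 = b2 then 0
  else if v ∈ tailSupport P x (J0 x y) ∧ v ∉ tailSupport P y (J0 x y) then
    rrel x y b1 b2 * g / (n : ℝ) ^ (1.5 : ℝ)
  else if v ∈ tailSupport P y (J0 x y) ∧ v ∉ tailSupport P x (J0 x y) then
    rrel x y b1 b2 * (n : ℝ) ^ (1.5 : ℝ) / g
  else rrel x y b1 b2

/-- The vertex congestion of the graph `G`. -/
noncomputable def vertexCongestion {n : ℕ} (G : SimpleGraph (Fin n)) : ℕ :=
  sInf {c | ∃ P : PathSystem G, P.congestion = c}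

/-- The number of cut edges `|E(S, V∖S)|`. -/
def cutEdges {n : ℕ} (G : SimpleGraph (Fin n)) [DecidableRel G.Adj]
    (S : Finset (Fin n)) : ℕ :=
  ((S ×ˢ Sᶜ).filter fun p => G.Adj p.1 p.2).card

/-!
Suppose `v` lies in neither tail. The segments `P^{x_k,x_{k+1}}` and `P^{y_k,y_{k+1}}` with
`k < J` coincide, since the prefixes of `x` and `y` agree up to `x_J = y_J`. A later segment
containing `v` outside the tail must be the `J`-th one with `v = x_J = y_J` at its head: `v` cannot
be the head `x_k` of a segment with `k > J`, as goodness makes `x_{k-1} ≠ x_k`, so `x_k` already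
lies in the tail of the previous segment. Hence `v` meets the same segments at the same positions
in both staircases, so `f_x(v) = f_y(v)`; and `v` is neither endpoint `x_{L+1}` nor `y_{L+1}`,
which lie in the tails. Thus `g_{x,b₁}(v) = g_{y,b₂}(v)`.
-/

section Staircase

variable {n L : ℕ} {G : SimpleGraph (Fin n)} (P : PathSystem G) (x y : Fin (L + 1) → Fin n)

lemma segSupport_eq {i : ℕ} (hi : i < L) :
    segSupport P x i = (P.path (x ⟨i, by omega⟩) (x ⟨i + 1, by omega⟩)).support := by
  have h1 : (⟨min i L, by omega⟩ : Fin (L + 1)) = ⟨i, by omega⟩ := Fin.ext (by simp; omega)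
  have h2 : (⟨min (i + 1) L, by omega⟩ : Fin (L + 1)) = ⟨i + 1, by omega⟩ :=
    Fin.ext (by simp; omega)
  rw [segSupport, h1, h2]

lemma mem_segSupport_iff {i : ℕ} (hi : i < L) {v : Fin n} :
    v ∈ segSupport P x i ↔ v = x ⟨i, by omega⟩ ∨ v ∈ (segSupport P x i).tail := by
  rw [segSupport_eq P x hi]
  conv_lhs => rw [← SimpleGraph.Walk.cons_tail_support]
  exact List.mem_cons

lemma idxOf_segSupport_head {i : ℕ} (hi : i < L) :
    (segSupport P x i).idxOf (x ⟨i, by omega⟩) = 0 := by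
  rw [segSupport_eq P x hi, ← SimpleGraph.Walk.cons_tail_support]
  exact List.idxOf_cons_self

lemma end_mem_segSupport {i : ℕ} (hi : i < L) : x ⟨i + 1, by omega⟩ ∈ segSupport P x i := by
  rw [segSupport_eq P x hi]
  exact SimpleGraph.Walk.end_mem_support _

lemma end_mem_tail_segSupport (hx : Function.Injective x) {i : ℕ} (hi : i < L) :
    x ⟨i + 1, by omega⟩ ∈ (segSupport P x i).tail := by
  have hne : x ⟨i + 1, by omega⟩ ≠ x ⟨i, by omega⟩ := fun h => by simpa using hx h
  simpa [hne] using (mem_segSupport_iff P x hi).1 (end_mem_segSupport P x hi)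

lemma segSupport_eq_of_agree {j k : ℕ} (hkj : k < j) (hj : j ≤ L)
    (hpre : ∀ i : Fin (L + 1), (i : ℕ) ≤ j → x i = y i) :
    segSupport P x k = segSupport P y k := by
  rw [segSupport_eq P x (by omega), segSupport_eq P y (by omega),
    hpre ⟨k, _⟩ (by simp only; omega), hpre ⟨k + 1, _⟩ (by simp only; omega)]

lemma stairSupportFrom_eq_cons (j : ℕ) :
    stairSupportFrom P x j = x ⟨min j L, by omega⟩ :: tailSupport P x j := by
  simp only [tailSupport, stairSupportFrom, List.erase_cons_head]

lemma mem_tailSupport_iff {j : ℕ} (hj : j ≤ L) {v : Fin n} :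
    v ∈ tailSupport P x j ↔ ∃ i, j ≤ i ∧ i < L ∧ v ∈ (segSupport P x i).tail := by
  unfold tailSupport stairSupportFrom
  simp only [List.erase_cons_head, List.mem_flatten, List.mem_ofFn]
  constructor
  · rintro ⟨l, ⟨k, rfl⟩, hv⟩
    refine ⟨j + k, Nat.le_add_right _ _, by omega, ?_⟩
    rwa [segSupport_eq P x (by omega)]
  · rintro ⟨i, hji, hiL, hv⟩
    refine ⟨_, ⟨⟨i - j, by omega⟩, rfl⟩, ?_⟩
    rw [segSupport_eq P x hiL] at hv
    convert hv using 4 <;> simp only [Fin.mk.injEq] <;> omega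

lemma mem_stairSupportFrom_zero_iff (hL : 0 < L) {v : Fin n} :
    v ∈ stairSupportFrom P x 0 ↔ ∃ k < L, v ∈ segSupport P x k := by
  rw [stairSupportFrom_eq_cons, List.mem_cons, mem_tailSupport_iff P x (Nat.zero_le L)]
  constructor
  · rintro (h | ⟨i, -, hi, hv⟩)
    · exact ⟨0, hL, (mem_segSupport_iff P x hL).2 (Or.inl (by simpa using h))⟩
    · exact ⟨i, hi, (mem_segSupport_iff P x hi).2 (Or.inr hv)⟩
  · rintro ⟨k, hk, hv⟩
    induction k with
    | zero =>
      rcases (mem_segSupport_iff P x hk).1 hv with h | h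
      · exact Or.inl (by simpa using h)
      · exact Or.inr ⟨0, le_rfl, hk, h⟩
    | succ k ih =>
      rcases (mem_segSupport_iff P x hk).1 hv with h | h
      · exact ih (by omega) (by rw [h]; exact end_mem_segSupport P x (by omega))
      · exact Or.inr ⟨k + 1, by omega, hk, h⟩

lemma last_mem_tailSupport (hx : Function.Injective x) {j : ℕ} (hj : j < L) :
    x (Fin.last L) ∈ tailSupport P x j := by
  obtain ⟨i, rfl⟩ : ∃ i, L = i + 1 := ⟨L - 1, by omega⟩
  exact (mem_tailSupport_iff P x hj.le).2
    ⟨i, by omega, by omega, end_mem_tail_segSupport P x hx (by omega : i < i + 1)⟩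

lemma eq_head_of_mem_segSupport (hx : Function.Injective x) {j k : ℕ} (hjk : j ≤ k) (hk : k < L)
    {v : Fin n} (hvt : v ∉ tailSupport P x j) (hv : v ∈ segSupport P x k) :
    k = j ∧ v = x ⟨j, by omega⟩ := by
  have hnot : ∀ i, j ≤ i → i < L → v ∉ (segSupport P x i).tail := fun i hji hi h =>
    hvt ((mem_tailSupport_iff P x (by omega)).2 ⟨i, hji, hi, h⟩)
  rcases (mem_segSupport_iff P x hk).1 hv with h | h
  · obtain rfl | hlt := eq_or_lt_of_le hjk
    · exact ⟨rfl, h⟩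
    · obtain ⟨i, rfl⟩ : ∃ i, k = i + 1 := ⟨k - 1, by omega⟩
      exact (hnot i (by omega) (by omega) (h ▸ end_mem_tail_segSupport P x hx (by omega))).elim
  · exact (hnot k hjk hk h).elim

section Agree

variable {j : ℕ} (hj : j < L) (hpre : ∀ i : Fin (L + 1), (i : ℕ) ≤ j → x i = y i)
  {v : Fin n} (hvx : v ∉ tailSupport P x j) (hvy : v ∉ tailSupport P y j)
include hj hpre hvx hvy

lemma mem_segSupport_iff_of_not_mem_tailSupport (hx : Function.Injective x)
    (hy : Function.Injective y) {k : ℕ} (hk : k < L) :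
    v ∈ segSupport P x k ↔ v ∈ segSupport P y k := by
  rcases lt_or_ge k j with hkj | hjk
  · rw [segSupport_eq_of_agree P x y hkj hj.le hpre]
  · have hxy : x ⟨j, by omega⟩ = y ⟨j, by omega⟩ := hpre _ le_rfl
    constructor
    · intro hv
      obtain ⟨rfl, rfl⟩ := eq_head_of_mem_segSupport P x hx hjk hk hvx hv
      exact (mem_segSupport_iff P y hk).2 (Or.inl hxy)
    · intro hv
      obtain ⟨rfl, rfl⟩ := eq_head_of_mem_segSupport P y hy hjk hk hvy hv
      exact (mem_segSupport_iff P x hk).2 (Or.inl hxy.symm)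

lemma idxOf_segSupport_eq_of_not_mem_tailSupport (hx : Function.Injective x)
    (hy : Function.Injective y) {k : ℕ} (hk : k < L) (hv : v ∈ segSupport P x k) :
    (segSupport P x k).idxOf v = (segSupport P y k).idxOf v := by
  rcases lt_or_ge k j with hkj | hjk
  · rw [segSupport_eq_of_agree P x y hkj hj.le hpre]
  · have hvy' := (mem_segSupport_iff_of_not_mem_tailSupport P x y hj hpre hvx hvy hx hy hk).1 hv
    obtain ⟨rfl, rfl⟩ := eq_head_of_mem_segSupport P x hx hjk hk hvx hv
    rw [idxOf_segSupport_head P x hk, hpre _ le_rfl, idxOf_segSupport_head P y hk]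

end Agree

lemma maxSegIdx_spec {v : Fin n} (h : ∃ k < L, v ∈ segSupport P x k) :
    maxSegIdx P x v < L ∧ v ∈ segSupport P x (maxSegIdx P x v) := by
  obtain ⟨k, hk, hv⟩ := h
  obtain ⟨m, hm, hmax⟩ := Finset.exists_mem_eq_sup
    ((Finset.range L).filter fun i => v ∈ segSupport P x i) ⟨k, by simp [hk, hv]⟩ id
  rw [maxSegIdx, hmax]
  simpa using hm

lemma fS_eq_of_segSupport_agree (h0 : x 0 = y 0) (hL : 0 < L) {v : Fin n}
    (hmem : ∀ k < L, v ∈ segSupport P x k ↔ v ∈ segSupport P y k)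
    (hidx : ∀ k < L, v ∈ segSupport P x k →
      (segSupport P x k).idxOf v = (segSupport P y k).idxOf v) :
    fS P x v = fS P y v := by
  have hmax : maxSegIdx P x v = maxSegIdx P y v := by
    unfold maxSegIdx
    congr 1
    exact Finset.filter_congr fun k hk => hmem k (Finset.mem_range.1 hk)
  have hstair : v ∈ stairSupportFrom P x 0 ↔ v ∈ stairSupportFrom P y 0 := by
    simp only [mem_stairSupportFrom_zero_iff P _ hL]
    exact exists_congr fun k => and_congr_right fun hk => hmem k hk
  unfold fS
  by_cases hs : v ∈ stairSupportFrom P x 0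
  · obtain ⟨hm, hvm⟩ := maxSegIdx_spec P x ((mem_stairSupportFrom_zero_iff P x hL).1 hs)
    rw [if_pos hs, if_pos (hstair.1 hs), hidx _ hm hvm, hmax]
  · rw [if_neg hs, if_neg (mt hstair.2 hs), h0]

end Staircase

section CommonPrefix

variable {n L : ℕ} (x y : Fin (L + 1) → Fin n)

lemma J0_le : J0 x y ≤ L :=
  Finset.sup_le fun i _ => Nat.lt_succ_iff.1 i.isLt

lemma eq_of_le_J0 (h0 : x 0 = y 0) (k : Fin (L + 1)) (hk : (k : ℕ) ≤ J0 x y) : x k = y k := by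
  obtain ⟨i, hi, hJ⟩ := Finset.exists_mem_eq_sup
    (Finset.univ.filter fun i : Fin (L + 1) => ∀ k ≤ i, x k = y k)
    ⟨0, by simpa [nonpos_iff_eq_zero] using h0⟩ fun i => (i : ℕ)
  rw [J0, hJ] at hk
  exact (Finset.mem_filter.1 hi).2 k hk

lemma J0_lt (h0 : x 0 = y 0) (hxy : x ≠ y) : J0 x y < L :=
  (J0_le x y).lt_of_ne fun h => hxy (funext fun k => eq_of_le_J0 x y h0 k (by omega))

end CommonPrefix

theorem stmt6 {n L : ℕ} (hn : 2 ≤ n)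
    (G : SimpleGraph (Fin n)) (P : PathSystem G)
    (x y : Fin (L + 1) → Fin n)
    (hx1 : x 0 = ⟨0, by omega⟩) (hy1 : y 0 = ⟨0, by omega⟩)
    (hxgood : Function.Injective x) (hygood : Function.Injective y) (hxy : x ≠ y)
    (b1 b2 : ℤ)
    (v : Fin n) (hv : gS P x b1 v ≠ gS P y b2 v) :
    v ∈ tailSupport P x (J0 x y) ∨ v ∈ tailSupport P y (J0 x y) := by
  by_contra! hcon
  obtain ⟨hvx, hvy⟩ := hcon
  have h0 : x 0 = y 0 := hx1.trans hy1.symm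
  have hJ := J0_lt x y h0 hxy
  have hpre := eq_of_le_J0 x y h0
  have hf : fS P x v = fS P y v := fS_eq_of_segSupport_agree P x y h0 (by omega)
    (fun _ hk => mem_segSupport_iff_of_not_mem_tailSupport P x y hJ hpre hvx hvy hxgood hygood hk)
    (fun _ hk => idxOf_segSupport_eq_of_not_mem_tailSupport P x y hJ hpre hvx hvy hxgood hygood hk)
  have hlx : v ≠ x (Fin.last L) := fun h => hvx (h ▸ last_mem_tailSupport P x hxgood hJ)
  have hly : v ≠ y (Fin.last L) := fun h => hvy (h ▸ last_mem_tailSupport P y hygood hJ)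
  exact hv (by simp only [gS, if_neg hlx, if_neg hly, hf])
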